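/- On the nilpotent Lie algebra g_{5,1}⊕ℝ with structure equations (0,0,0,0,e^{12},e^{13}), consider the SU(2) structure α = e^1+ie^4, ω = e^{25}-e^{36}, Ω = (e^2+ie^5)∧(-e^3+ie^6); then the 2-form F = e^{14} + e^{25} - e^{36} and the 3-form ρ = Re(α∧Ω) are both closed, and F is nondegenerate (F^3 ≠ 0). -/
import Mathlib


open ExteriorAlgebra

noncomputable section

/-- The complexified exterior algebra of the dual of the 6-dimensional nilpotent
    Lie algebra g_{5,1} ⊕ ℝ. -/
abbrev E6 : Type := ExteriorAlgebra ℂ (Fin 6 → ℂ)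

/-- The basis 1-forms e^1, ..., e^6 (0-indexed). -/
def e (i : Fin 6) : E6 := ι ℂ (Pi.single i 1)

/-- Structure equations of g_{5,1} ⊕ ℝ: (0,0,0,0,e^{12},e^{13}). -/
def d1 : Fin 6 → E6 := ![0, 0, 0, 0, e 0 * e 1, e 0 * e 2]

/-- α = e^1 + i e^4. -/
def α : E6 := e 0 + Complex.I • e 3
/-- The conjugate ᾱ = e^1 - i e^4. -/
def αbar : E6 := e 0 - Complex.I • e 3
/-- dα, by linearity. -/
def dα : E6 := d1 0 + Complex.I • d1 3
/-- dᾱ, by linearity. -/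
def dαbar : E6 := d1 0 - Complex.I • d1 3
/-- β = e^2 + i e^5. -/
def β : E6 := e 1 + Complex.I • e 4
def dβ : E6 := d1 1 + Complex.I • d1 4
def βbar : E6 := e 1 - Complex.I • e 4
def dβbar : E6 := d1 1 - Complex.I • d1 4
/-- γ = -e^3 + i e^6. -/
def γ : E6 := -(e 2) + Complex.I • e 5
def dγ : E6 := -(d1 2) + Complex.I • d1 5
def γbar : E6 := -(e 2) - Complex.I • e 5
def dγbar : E6 := -(d1 2) - Complex.I • d1 5
/-- Ω = (e^2 + i e^5) ∧ (-e^3 + i e^6). -/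
def Ω : E6 := β * γ
/-- dΩ, by the Leibniz rule. -/
def dΩ : E6 := dβ * γ - β * dγ
def Ωbar : E6 := βbar * γbar
def dΩbar : E6 := dβbar * γbar - βbar * dγbar
/-- ω = e^{25} - e^{36}. -/
def ω : E6 := e 1 * e 4 - e 2 * e 5
/-- dω, by the Leibniz rule. -/
def dω : E6 := (d1 1 * e 4 - e 1 * d1 4) - (d1 2 * e 5 - e 2 * d1 5)
/-- F = ω + (i/2) α ∧ ᾱ  (= e^{14} + e^{25} - e^{36}). -/
def F : E6 := ω + (Complex.I / 2) • (α * αbar)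
/-- dF, by linearity and the Leibniz rule. -/
def dF : E6 := dω + (Complex.I / 2) • (dα * αbar - α * dαbar)
/-- ρ = Re(α ∧ Ω) = (1/2)(α ∧ Ω + ᾱ ∧ Ω̄). -/
def ρ : E6 := ((1 : ℂ) / 2) • (α * Ω + αbar * Ωbar)
/-- dρ, by linearity and the Leibniz rule. -/
def dρ : E6 := ((1 : ℂ) / 2) • ((dα * Ω - α * dΩ) + (dαbar * Ωbar - αbar * dΩbar))


lemma e_sq (i : Fin 6) : e i * e i = 0 := ι_sq_zero _
lemma e_sq' (i : Fin 6) (x : E6) : e i * (e i * x) = 0 := by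
  rw [← mul_assoc, e_sq, zero_mul]
lemma e_swap (i j : Fin 6) : e j * e i = -(e i * e j) :=
  eq_neg_of_add_eq_zero_left (ι_add_mul_swap _ _)
lemma e_swap' (i j : Fin 6) (x : E6) : e j * (e i * x) = -(e i * (e j * x)) := by
  rw [← mul_assoc, e_swap, neg_mul, mul_assoc]

lemma hd10 : d1 0 = 0 := rfl
lemma hd11 : d1 1 = 0 := rfl
lemma hd12 : d1 2 = 0 := rfl
lemma hd13 : d1 3 = 0 := rfl
lemma hd14 : d1 4 = e 0 * e 1 := rfl
lemma hd15 : d1 5 = e 0 * e 2 := rfl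

lemma sw10 : e 1 * e 0 = -(e 0 * e 1) := e_swap 0 1
lemma sw10' (x : E6) : e 1 * (e 0 * x) = -(e 0 * (e 1 * x)) := e_swap' 0 1 x
lemma sw20 : e 2 * e 0 = -(e 0 * e 2) := e_swap 0 2
lemma sw20' (x : E6) : e 2 * (e 0 * x) = -(e 0 * (e 2 * x)) := e_swap' 0 2 x
lemma sw21 : e 2 * e 1 = -(e 1 * e 2) := e_swap 1 2
lemma sw21' (x : E6) : e 2 * (e 1 * x) = -(e 1 * (e 2 * x)) := e_swap' 1 2 x
lemma sw30 : e 3 * e 0 = -(e 0 * e 3) := e_swap 0 3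
lemma sw30' (x : E6) : e 3 * (e 0 * x) = -(e 0 * (e 3 * x)) := e_swap' 0 3 x
lemma sw31 : e 3 * e 1 = -(e 1 * e 3) := e_swap 1 3
lemma sw31' (x : E6) : e 3 * (e 1 * x) = -(e 1 * (e 3 * x)) := e_swap' 1 3 x
lemma sw32 : e 3 * e 2 = -(e 2 * e 3) := e_swap 2 3
lemma sw32' (x : E6) : e 3 * (e 2 * x) = -(e 2 * (e 3 * x)) := e_swap' 2 3 x
lemma sw40 : e 4 * e 0 = -(e 0 * e 4) := e_swap 0 4
lemma sw40' (x : E6) : e 4 * (e 0 * x) = -(e 0 * (e 4 * x)) := e_swap' 0 4 x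
lemma sw41 : e 4 * e 1 = -(e 1 * e 4) := e_swap 1 4
lemma sw41' (x : E6) : e 4 * (e 1 * x) = -(e 1 * (e 4 * x)) := e_swap' 1 4 x
lemma sw42 : e 4 * e 2 = -(e 2 * e 4) := e_swap 2 4
lemma sw42' (x : E6) : e 4 * (e 2 * x) = -(e 2 * (e 4 * x)) := e_swap' 2 4 x
lemma sw43 : e 4 * e 3 = -(e 3 * e 4) := e_swap 3 4
lemma sw43' (x : E6) : e 4 * (e 3 * x) = -(e 3 * (e 4 * x)) := e_swap' 3 4 x
lemma sw50 : e 5 * e 0 = -(e 0 * e 5) := e_swap 0 5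
lemma sw50' (x : E6) : e 5 * (e 0 * x) = -(e 0 * (e 5 * x)) := e_swap' 0 5 x
lemma sw51 : e 5 * e 1 = -(e 1 * e 5) := e_swap 1 5
lemma sw51' (x : E6) : e 5 * (e 1 * x) = -(e 1 * (e 5 * x)) := e_swap' 1 5 x
lemma sw52 : e 5 * e 2 = -(e 2 * e 5) := e_swap 2 5
lemma sw52' (x : E6) : e 5 * (e 2 * x) = -(e 2 * (e 5 * x)) := e_swap' 2 5 x
lemma sw53 : e 5 * e 3 = -(e 3 * e 5) := e_swap 3 5
lemma sw53' (x : E6) : e 5 * (e 3 * x) = -(e 3 * (e 5 * x)) := e_swap' 3 5 x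
lemma sw54 : e 5 * e 4 = -(e 4 * e 5) := e_swap 4 5
lemma sw54' (x : E6) : e 5 * (e 4 * x) = -(e 4 * (e 5 * x)) := e_swap' 4 5 x

attribute [local simp] sw10 sw10' sw20 sw20' sw21 sw21' sw30 sw30' sw31 sw31' sw32 sw32' sw40 sw40' sw41 sw41' sw42 sw42' sw43 sw43' sw50 sw50' sw51 sw51' sw52 sw52' sw53 sw53' sw54 sw54'

attribute [local simp] e_sq e_sq' hd10 hd11 hd12 hd13 hd14 hd15 mul_assoc Complex.I_mul_I Complex.I_sq

lemma hdF : dF = 0 := by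
  simp [dF, dω, dα, dαbar, mul_add, add_mul, mul_sub, sub_mul, smul_smul, smul_sub, smul_add]

lemma hdρ : dρ = 0 := by
  simp [dρ, dα, dαbar, dΩ, dΩbar, Ω, Ωbar, α, αbar, β, βbar, γ, γbar, dβ, dβbar, dγ, dγbar,
    mul_add, add_mul, mul_sub, sub_mul, smul_smul, smul_sub, smul_add, smul_mul_assoc,
    mul_smul_comm, neg_smul, smul_neg]
  abel

lemma hF3 : F * F * F = (6 : ℂ) • (e 0 * (e 1 * (e 2 * (e 3 * (e 4 * e 5))))) := by
  simp [F, ω, α, αbar, mul_add, add_mul, mul_sub, sub_mul, smul_smul, smul_sub, smul_add,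
    smul_mul_assoc, mul_smul_comm, neg_smul, smul_neg]
  match_scalars <;> (ring_nf; norm_num [Complex.I_sq])

def fam : ∀ i : ℕ, (Fin 6 → ℂ) [⋀^Fin i]→ₗ[ℂ] ℂ :=
  Function.update (fun _ => 0) 6 (Pi.basisFun ℂ (Fin 6)).det

set_option maxRecDepth 4000 in
lemma hfam6 : fam 6 = (Pi.basisFun ℂ (Fin 6)).det := Function.update_self _ _ _

lemma key : e 0 * (e 1 * (e 2 * (e 3 * (e 4 * e 5)))) =
    ιMulti ℂ 6 (fun i : Fin 6 => (Pi.single i 1 : Fin 6 → ℂ)) := by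
  rw [ιMulti_apply]
  simp [e, List.ofFn_succ, mul_assoc]

set_option maxRecDepth 100000 in
set_option maxHeartbeats 1000000 in
lemma hF3ne : F * F * F ≠ 0 := by
  intro h
  have h2 := congrArg (liftAlternating fam) (hF3 ▸ h)
  rw [map_smul, key, liftAlternating_apply_ιMulti, map_zero] at h2
  have h3 : fam 6 (fun i : Fin 6 => (Pi.single i 1 : Fin 6 → ℂ)) = 1 := by
    have h4 : (fun i : Fin 6 => (Pi.single i 1 : Fin 6 → ℂ)) = ⇑(Pi.basisFun ℂ (Fin 6)) := by
      funext i; simp [Pi.basisFun_apply]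
    rw [hfam6, h4]
    exact (Pi.basisFun ℂ (Fin 6)).det_self
  rw [h3, smul_eq_mul, mul_one] at h2
  norm_num at h2

/-- On g_{5,1} ⊕ ℝ, the 2-form F = ω + (i/2) α∧ᾱ = e^{14} + e^{25} - e^{36} and the
    3-form ρ = Re(α ∧ Ω) are both closed, and F is nondegenerate: F ∧ F ∧ F ≠ 0. -/
theorem stmt4 : dF = 0 ∧ dρ = 0 ∧ F * F * F ≠ 0 := ⟨hdF, hdρ, hF3ne⟩
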